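/- If S(x) = \sum_{p \le x} \sqrt{(\log p)/p} satisfies S(x) \asymp \sqrt{x/\log x}, then the Chebyshev bounds hold: \pi(x) \asymp x/\log x. -/
import Mathlib

open Filter

noncomputable def primesUpTo (x : ℝ) : Finset ℕ :=
  (Finset.range (⌊x⌋₊ + 1)).filter Nat.Prime

noncomputable def S (x : ℝ) : ℝ := ∑ p ∈ primesUpTo x, Real.sqrt (Real.log p / p)

noncomputable def M (x : ℝ) : ℝ := ∑ p ∈ primesUpTo x, Real.log p / p

lemma card_primesUpTo (x : ℝ) : (primesUpTo x).card = Nat.primeCounting ⌊x⌋₊ := by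
  rw [Nat.primeCounting, Nat.primeCounting', Nat.count_eq_card_filter_range]
  rfl

lemma primesUpTo_mono {x y : ℝ} (h : x ≤ y) : primesUpTo x ⊆ primesUpTo y :=
  Finset.filter_subset_filter _ (Finset.range_subset_range.2 (by
    have := Nat.floor_le_floor h; omega))

lemma le_of_mem_primesUpTo {x : ℝ} {p : ℕ} (hp : p ∈ primesUpTo x) : (p : ℝ) ≤ x := by
  rcases le_or_gt 0 x with hx | hx
  · have h1 : p < ⌊x⌋₊ + 1 := Finset.mem_range.1 (Finset.mem_filter.1 hp).1
    have h2 : (p : ℝ) ≤ (⌊x⌋₊ : ℝ) := by exact_mod_cast Nat.lt_add_one_iff.1 h1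
    exact h2.trans (Nat.floor_le hx)
  · exfalso
    have h1 : p < ⌊x⌋₊ + 1 := Finset.mem_range.1 (Finset.mem_filter.1 hp).1
    have : ⌊x⌋₊ = 0 := Nat.floor_eq_zero.2 (hx.trans zero_lt_one)
    have hp2 := (Finset.mem_filter.1 hp).2.two_le
    omega

lemma prime_of_mem_primesUpTo {x : ℝ} {p : ℕ} (hp : p ∈ primesUpTo x) : p.Prime :=
  (Finset.mem_filter.1 hp).2

lemma lt_of_notMem_primesUpTo {y : ℝ} {p : ℕ} (hp : p.Prime) (h : p ∉ primesUpTo y) :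
    y < (p : ℝ) := by
  by_contra hc
  push_neg at hc
  have h1 : p ≤ ⌊y⌋₊ := Nat.le_floor hc
  exact h (Finset.mem_filter.2 ⟨Finset.mem_range.2 (by omega), hp⟩)

theorem stmt_13
    (hS : ∃ c C : ℝ, 0 < c ∧ c ≤ C ∧ ∀ᶠ x : ℝ in atTop,
      c * Real.sqrt (x / Real.log x) ≤ S x ∧ S x ≤ C * Real.sqrt (x / Real.log x)) :
    ∃ c C : ℝ, 0 < c ∧ c ≤ C ∧ ∀ᶠ x : ℝ in atTop,
      c * (x / Real.log x) ≤ (Nat.primeCounting ⌊x⌋₊ : ℝ) ∧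
      (Nat.primeCounting ⌊x⌋₊ : ℝ) ≤ C * (x / Real.log x) := by
  obtain ⟨c, C, hc, hcC, hev⟩ := hS
  have hC : 0 < C := hc.trans_le hcC
  set ε : ℝ := c ^ 2 / (8 * C ^ 2) with hεdef
  have hε : 0 < ε := by positivity
  have hε1 : ε ≤ 1 := by
    rw [hεdef, div_le_one (by positivity)]
    nlinarith
  have hsqε : Real.sqrt (2 * ε) = c / (2 * C) := by
    rw [show 2 * ε = (c / (2 * C)) ^ 2 by rw [hεdef]; field_simp; ring]
    exact Real.sqrt_sq (by positivity)
  refine ⟨c * Real.sqrt ε / 2, Real.sqrt 2 * C + 1, by positivity, ?_, ?_⟩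
  · have h1 : Real.sqrt ε ≤ 1 := by
      rw [show (1:ℝ) = Real.sqrt 1 by simp]
      exact Real.sqrt_le_sqrt hε1
    have h2 : (1:ℝ) ≤ Real.sqrt 2 := Real.one_le_sqrt.2 one_le_two
    nlinarith [Real.sqrt_nonneg ε]
  -- eventual hypotheses
  have hevε : ∀ᶠ x : ℝ in atTop,
      c * Real.sqrt (ε * x / Real.log (ε * x)) ≤ S (ε * x) ∧
      S (ε * x) ≤ C * Real.sqrt (ε * x / Real.log (ε * x)) :=
    (tendsto_id.const_mul_atTop hε).eventually hev
  have hlog1 : ∀ᶠ x : ℝ in atTop, 1 ≤ Real.log x :=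
    Real.tendsto_log_atTop.eventually_ge_atTop 1
  have hlog2 : ∀ᶠ x : ℝ in atTop, 2 * Real.log (1 / ε) ≤ Real.log x :=
    Real.tendsto_log_atTop.eventually_ge_atTop _
  have hlogsq : ∀ᶠ x : ℝ in atTop, Real.log x ≤ (1/4) * Real.sqrt x := by
    have := (isLittleO_log_rpow_atTop (by norm_num : (0:ℝ) < 1/2)).def
      (by norm_num : (0:ℝ) < 1/4)
    filter_upwards [this, eventually_ge_atTop (0:ℝ)] with x hx hx0
    rw [Real.norm_eq_abs, Real.norm_eq_abs] at hx
    calc Real.log x ≤ |Real.log x| := le_abs_self _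
      _ ≤ 1/4 * |x ^ (1/2 : ℝ)| := hx
      _ = 1/4 * Real.sqrt x := by
          rw [abs_of_nonneg (Real.rpow_nonneg hx0 _), Real.sqrt_eq_rpow]
  filter_upwards [hev, hevε, hlog1, hlog2, hlogsq, eventually_ge_atTop (1:ℝ)]
    with x hx hxε hL1 hL2 hLs hx1
  have hx0 : (0:ℝ) < x := lt_of_lt_of_le zero_lt_one hx1
  set L := Real.log x with hLdef
  have hL0 : (0:ℝ) < L := lt_of_lt_of_le zero_lt_one hL1
  have hxL0 : (0:ℝ) < x / L := by positivity
  have hπeq : ((Nat.primeCounting ⌊x⌋₊ : ℕ) : ℝ) = ((primesUpTo x).card : ℝ) := by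
    rw [card_primesUpTo]
  set P := primesUpTo x with hPdef
  have hA : Real.sqrt (x / L) = Real.sqrt (x / Real.log x) := rfl
  constructor
  · -- lower bound
    set R := primesUpTo (ε * x) with hRdef
    have hRP : R ⊆ P := primesUpTo_mono (by nlinarith)
    have hterm : ∀ p ∈ P \ R, Real.sqrt (Real.log p / p) ≤ Real.sqrt (L / (ε * x)) := by
      intro p hp
      obtain ⟨hpP, hpR⟩ := Finset.mem_sdiff.1 hp
      have hpr := prime_of_mem_primesUpTo hpP
      have hple : (p : ℝ) ≤ x := le_of_mem_primesUpTo hpP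
      have hpgt : ε * x < (p : ℝ) := lt_of_notMem_primesUpTo hpr hpR
      have hp0 : (0:ℝ) < (p : ℝ) := by exact_mod_cast hpr.pos
      apply Real.sqrt_le_sqrt
      exact div_le_div₀ hL0.le (Real.log_le_log hp0 hple) (by positivity) hpgt.le
    have hsum1 : ∑ p ∈ P \ R, Real.sqrt (Real.log p / p)
        ≤ (P.card : ℝ) * Real.sqrt (L / (ε * x)) := by
      calc ∑ p ∈ P \ R, Real.sqrt (Real.log p / p)
          ≤ (P \ R).card • Real.sqrt (L / (ε * x)) :=
            Finset.sum_le_card_nsmul _ _ _ hterm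
        _ = ((P \ R).card : ℝ) * Real.sqrt (L / (ε * x)) := by
            rw [nsmul_eq_mul]
        _ ≤ (P.card : ℝ) * Real.sqrt (L / (ε * x)) := by
            have h := Finset.card_le_card (Finset.sdiff_subset (s := P) (t := R))
            gcongr
    have hsplit : ∑ p ∈ P \ R, Real.sqrt (Real.log p / p) = S x - S (ε * x) := by
      have := Finset.sum_sdiff (f := fun p : ℕ => Real.sqrt (Real.log p / p)) hRP
      have hR : S (ε * x) = ∑ p ∈ R, Real.sqrt (Real.log p / p) := rfl
      have hP : S x = ∑ p ∈ P, Real.sqrt (Real.log p / p) := rfl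
      linarith
    have hlogεx : L / 2 ≤ Real.log (ε * x) := by
      rw [Real.log_mul (ne_of_gt hε) (ne_of_gt hx0)]
      have h1 : Real.log (1 / ε) = -Real.log ε := by
        rw [one_div, Real.log_inv]
      linarith
    have hbound : C * Real.sqrt (ε * x / Real.log (ε * x)) ≤ c / 2 * Real.sqrt (x / L) := by
      have h1 : ε * x / Real.log (ε * x) ≤ 2 * ε * (x / L) := by
        calc ε * x / Real.log (ε * x) ≤ ε * x / (L / 2) := by
              apply div_le_div_of_nonneg_left (by positivity) (by linarith) hlogεx
          _ = 2 * ε * (x / L) := by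
              field_simp
      calc C * Real.sqrt (ε * x / Real.log (ε * x))
          ≤ C * Real.sqrt (2 * ε * (x / L)) := by
            gcongr
        _ = C * (Real.sqrt (2 * ε) * Real.sqrt (x / L)) := by
            rw [Real.sqrt_mul (by positivity)]
        _ = c / 2 * Real.sqrt (x / L) := by
            rw [hsqε]
            field_simp
    have hkey : c / 2 * Real.sqrt (x / L) ≤ (P.card : ℝ) * Real.sqrt (L / (ε * x)) := by
      have h1 := hx.1
      have h2 := hxε.2
      linarith [hsplit ▸ hsum1]
    have hmul : Real.sqrt (L / (ε * x)) * Real.sqrt (ε * x / L) = 1 := by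
      rw [← Real.sqrt_mul (by positivity)]
      rw [show L / (ε * x) * (ε * x / L) = 1 by field_simp]
      exact Real.sqrt_one
    have hA2 : Real.sqrt (x / L) * Real.sqrt (ε * x / L) = Real.sqrt ε * (x / L) := by
      rw [← Real.sqrt_mul (by positivity),
        show x / L * (ε * x / L) = ε * (x / L) ^ 2 by ring,
        Real.sqrt_mul hε.le, Real.sqrt_sq hxL0.le]
    rw [hπeq]
    calc c * Real.sqrt ε / 2 * (x / L)
        = c / 2 * (Real.sqrt ε * (x / L)) := by ring
      _ = c / 2 * (Real.sqrt (x / L) * Real.sqrt (ε * x / L)) := by rw [hA2]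
      _ = (c / 2 * Real.sqrt (x / L)) * Real.sqrt (ε * x / L) := by ring
      _ ≤ ((P.card : ℝ) * Real.sqrt (L / (ε * x))) * Real.sqrt (ε * x / L) := by
          apply mul_le_mul_of_nonneg_right hkey (Real.sqrt_nonneg _)
      _ = (P.card : ℝ) := by rw [mul_assoc, hmul, mul_one]
  · -- upper bound
    set Q := primesUpTo (Real.sqrt x) with hQdef
    have hQP : Q ⊆ P := primesUpTo_mono (by
      nlinarith [Real.mul_self_sqrt hx0.le, Real.sqrt_nonneg x])
    have h1sx : (1:ℝ) ≤ Real.sqrt x := Real.one_le_sqrt.2 hx1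
    have hterm : ∀ p ∈ P \ Q, Real.sqrt (L / (2 * x)) ≤ Real.sqrt (Real.log p / p) := by
      intro p hp
      obtain ⟨hpP, hpQ⟩ := Finset.mem_sdiff.1 hp
      have hpr := prime_of_mem_primesUpTo hpP
      have hple : (p : ℝ) ≤ x := le_of_mem_primesUpTo hpP
      have hpgt : Real.sqrt x < (p : ℝ) := lt_of_notMem_primesUpTo hpr hpQ
      have hp0 : (0:ℝ) < (p : ℝ) := by exact_mod_cast hpr.pos
      apply Real.sqrt_le_sqrt
      have hlogp : L / 2 ≤ Real.log p := by
        rw [← Real.log_sqrt hx0.le]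
        exact Real.log_le_log (lt_of_lt_of_le zero_lt_one h1sx) hpgt.le
      calc L / (2 * x) = (L / 2) / x := by ring
        _ ≤ Real.log p / p := div_le_div₀ (by linarith) hlogp hp0 hple
    have hsum1 : ((P \ Q).card : ℝ) * Real.sqrt (L / (2 * x)) ≤ S x := by
      calc ((P \ Q).card : ℝ) * Real.sqrt (L / (2 * x))
          = (P \ Q).card • Real.sqrt (L / (2 * x)) := by rw [nsmul_eq_mul]
        _ ≤ ∑ p ∈ P \ Q, Real.sqrt (Real.log p / p) :=
            Finset.card_nsmul_le_sum _ _ _ hterm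
        _ ≤ S x := Finset.sum_le_sum_of_subset_of_nonneg Finset.sdiff_subset
            (fun i _ _ => Real.sqrt_nonneg _)
    have hmul : Real.sqrt (L / (2 * x)) * Real.sqrt (2 * x / L) = 1 := by
      rw [← Real.sqrt_mul (by positivity)]
      rw [show L / (2 * x) * (2 * x / L) = 1 by field_simp]
      exact Real.sqrt_one
    have hA2 : Real.sqrt (x / L) * Real.sqrt (2 * x / L) = Real.sqrt 2 * (x / L) := by
      rw [← Real.sqrt_mul (by positivity),
        show x / L * (2 * x / L) = 2 * (x / L) ^ 2 by ring,
        Real.sqrt_mul (by norm_num), Real.sqrt_sq hxL0.le]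
    have hkey : ((P \ Q).card : ℝ) ≤ Real.sqrt 2 * C * (x / L) := by
      calc ((P \ Q).card : ℝ)
          = ((P \ Q).card : ℝ) * (Real.sqrt (L / (2 * x)) * Real.sqrt (2 * x / L)) := by
            rw [hmul, mul_one]
        _ = (((P \ Q).card : ℝ) * Real.sqrt (L / (2 * x))) * Real.sqrt (2 * x / L) := by
            ring
        _ ≤ (C * Real.sqrt (x / L)) * Real.sqrt (2 * x / L) :=
            mul_le_mul_of_nonneg_right (hsum1.trans hx.2) (Real.sqrt_nonneg _)
        _ = Real.sqrt 2 * C * (x / L) := by rw [mul_assoc, hA2]; ring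
    have hQcard : ((Q.card : ℝ)) ≤ x / L := by
      have h1 : Q.card ≤ ⌊Real.sqrt x⌋₊ + 1 := by
        rw [hQdef]
        unfold primesUpTo
        calc ((Finset.range (⌊Real.sqrt x⌋₊ + 1)).filter Nat.Prime).card
            ≤ (Finset.range (⌊Real.sqrt x⌋₊ + 1)).card := Finset.card_filter_le _ _
          _ = ⌊Real.sqrt x⌋₊ + 1 := Finset.card_range _
      have h2 : ((Q.card : ℝ)) ≤ Real.sqrt x + 1 := by
        calc ((Q.card : ℝ)) ≤ ((⌊Real.sqrt x⌋₊ + 1 : ℕ) : ℝ) := by exact_mod_cast h1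
          _ = (⌊Real.sqrt x⌋₊ : ℝ) + 1 := by push_cast; ring
          _ ≤ Real.sqrt x + 1 := by
              have := Nat.floor_le (Real.sqrt_nonneg x)
              linarith
      have hss : Real.sqrt x * Real.sqrt x = x := Real.mul_self_sqrt hx0.le
      have h3 : (Real.sqrt x + 1) * L ≤ x := by
        calc (Real.sqrt x + 1) * L ≤ (Real.sqrt x + Real.sqrt x) * L :=
              mul_le_mul_of_nonneg_right (by linarith) hL0.le
          _ = 2 * Real.sqrt x * L := by ring
          _ ≤ 2 * Real.sqrt x * (1 / 4 * Real.sqrt x) :=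
              mul_le_mul_of_nonneg_left hLs (by positivity)
          _ = Real.sqrt x * Real.sqrt x / 2 := by ring
          _ = x / 2 := by rw [hss]
          _ ≤ x := by linarith
      calc ((Q.card : ℝ)) ≤ Real.sqrt x + 1 := h2
        _ ≤ x / L := (le_div_iff₀ hL0).2 h3
    have hcards : (P.card : ℝ) ≤ ((P \ Q).card : ℝ) + (Q.card : ℝ) := by
      have := Finset.card_sdiff_add_card_eq_card hQP
      exact_mod_cast this.ge
    rw [hπeq]
    calc (P.card : ℝ) ≤ ((P \ Q).card : ℝ) + (Q.card : ℝ) := hcards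
      _ ≤ Real.sqrt 2 * C * (x / L) + x / L := add_le_add hkey hQcard
      _ = (Real.sqrt 2 * C + 1) * (x / L) := by ring
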